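/- If a simple Heffter system D(v,k) exists (a partition of a half-set of Z_v into parts of size k each summing to 0, each with a simple cyclic ordering), then the edge set of the complete graph K_v decomposes into k-cycles, and the resulting k-cycle system is invariant under the cyclic action x ↦ x+1 on Z_v. -/
import Mathlib


theorem pairEq {α : Type*} [DecidableEq α] (a b c d : α) (h : ({a,b} : Finset α) = {c,d}) :
    (a = c ∧ b = d) ∨ (a = d ∧ b = c) := by
  have := Finset.ext_iff.mp h
  have ha := (this a).mp (by simp)
  have hb := (this b).mp (by simp)
  have hc := (this c).mpr (by simp)
  have hd := (this d).mpr (by simp)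
  simp at ha hb hc hd
  rcases ha with h1|h1 <;> rcases hb with h2|h2 <;> tauto


/-- If a simple Heffter system D(v,k) exists (a partition of a half-set of Z_v
into parts of size k, each summing to 0 and each admitting a simple ordering),
then the edges of K_v decompose into k-cycles: there is a family of k-cycles
(each given by an injective map ZMod k → ZMod v, with edge set the set of pairs
of cyclically consecutive vertices) such that every pair of distinct vertices
lies on exactly one cycle, and the family is invariant under x ↦ x + 1. -/
theorem stmt14 (v k : ℕ) (hv : Odd v) (hk : 3 ≤ k)
    (L : Finset (ZMod v))
    (h0 : (0 : ZMod v) ∉ L)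
    (hL : ∀ x : ZMod v, x ≠ 0 → (x ∈ L ↔ -x ∉ L))
    (P : Finset (Finset (ZMod v)))
    (hcover : ∀ x ∈ L, ∃! p, p ∈ P ∧ x ∈ p)
    (hsub : ∀ p ∈ P, p ⊆ L)
    (hparts : ∀ p ∈ P, p.card = k ∧ ∑ x ∈ p, x = 0)
    (hsimple : ∀ p ∈ P, ∃ a : Fin k → ZMod v,
      Finset.image a Finset.univ = p ∧
      Function.Injective
        (fun l : Fin k => ∑ j ∈ Finset.univ.filter (· ≤ l), a j)) :
    ∃ C : Set (Set (Finset (ZMod v))),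
      (∀ E ∈ C, ∃ c : ZMod k → ZMod v, Function.Injective c ∧
        E = Set.range (fun i : ZMod k => ({c i, c (i + 1)} : Finset (ZMod v)))) ∧
      (∀ x y : ZMod v, x ≠ y →
        ∃! E, E ∈ C ∧ ({x, y} : Finset (ZMod v)) ∈ E) ∧
      (∀ E ∈ C, (fun e : Finset (ZMod v) => e.image (· + 1)) '' E ∈ C) := by
  classical
  haveI : NeZero k := ⟨by omega⟩
  haveI : Fact (1 < k) := ⟨by omega⟩
  choose a haimg hainj using hsimple
  set f : ZMod k → Fin k := fun i => ⟨i.val, ZMod.val_lt i⟩ with hf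
  have hfinj : Function.Injective f := by
    intro i j h
    exact ZMod.val_injective k (congrArg Fin.val h)
  set s : ∀ p, p ∈ P → Fin k → ZMod v :=
    fun p hp l => ∑ j ∈ Finset.univ.filter (· ≤ l), a p hp j with hs
  have hsinj : ∀ p (hp : p ∈ P), Function.Injective (s p hp) := fun p hp => hainj p hp
  -- a is injective
  have hain : ∀ p (hp : p ∈ P), Function.Injective (a p hp) := by
    intro p hp
    have hcard : (Finset.univ.image (a p hp)).card = (Finset.univ : Finset (Fin k)).card := by
      rw [haimg p hp, (hparts p hp).1, Finset.card_univ, Fintype.card_fin]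
    have h2 := Finset.card_image_iff.mp hcard
    intro x y hxy
    exact h2 (by simp) (by simp) hxy
  -- full sum is zero
  have hsum0 : ∀ p (hp : p ∈ P), ∑ j, a p hp j = 0 := by
    intro p hp
    have h1 : ∑ x ∈ Finset.image (a p hp) Finset.univ, x = ∑ j : Fin k, a p hp j :=
      Finset.sum_image (fun x _ y _ h => hain p hp h)
    rw [haimg p hp] at h1
    rw [← h1]
    exact (hparts p hp).2
  -- key difference lemma
  have hkey : ∀ p (hp : p ∈ P) (i : ZMod k),
      s p hp (f (i+1)) - s p hp (f i) = a p hp (f (i+1)) := by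
    intro p hp i
    have hv1 : (i + 1).val = (i.val + 1) % k := by
      rw [ZMod.val_add, ZMod.val_one]
    by_cases hlt : i.val + 1 < k
    · have hv2 : (i + 1).val = i.val + 1 := by rw [hv1, Nat.mod_eq_of_lt hlt]
      have hfilt : Finset.univ.filter (· ≤ f (i+1)) =
          insert (f (i+1)) (Finset.univ.filter (· ≤ f i)) := by
        ext j
        simp only [Finset.mem_filter, Finset.mem_univ, true_and, Finset.mem_insert,
          Fin.le_def, Fin.ext_iff, hf, hv2]
        omega
      have hnot : f (i+1) ∉ Finset.univ.filter (· ≤ f i) := by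
        simp only [Finset.mem_filter, Finset.mem_univ, true_and, Fin.le_def, hf, hv2]
        omega
      simp only [hs]
      rw [hfilt, Finset.sum_insert hnot]
      ring
    · have hik : i.val = k - 1 := by have := ZMod.val_lt i; omega
      have hv2 : (i + 1).val = 0 := by
        rw [hv1, hik]
        have hkk : k - 1 + 1 = k := by omega
        rw [hkk, Nat.mod_self]
      have hfull : Finset.univ.filter (· ≤ f i) = Finset.univ := by
        apply Finset.eq_univ_of_forall
        intro j
        simp only [Finset.mem_filter, Finset.mem_univ, true_and]
        show j.val ≤ i.val
        have hjk : (j : ℕ) < k := j.isLt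
        omega
      have h0f : Finset.univ.filter (· ≤ f (i+1)) = {f (i+1)} := by
        ext j
        simp only [Finset.mem_filter, Finset.mem_univ, true_and, Fin.le_def, Fin.ext_iff,
          Finset.mem_singleton, hf, hv2]
        omega
      simp only [hs]
      rw [hfull, h0f, Finset.sum_singleton, hsum0 p hp]
      ring
  -- the cycle system
  refine ⟨{E | ∃ p, ∃ hp : p ∈ P, ∃ t : ZMod v,
    E = Set.range (fun i : ZMod k =>
      ({s p hp (f i) + t, s p hp (f (i+1)) + t} : Finset (ZMod v)))}, ?_, ?_, ?_⟩
  · rintro E ⟨p, hp, t, rfl⟩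
    refine ⟨fun i => s p hp (f i) + t, ?_, rfl⟩
    intro i j h
    exact hfinj (hsinj p hp (add_right_cancel h))
  · -- covering
    have main : ∀ x y : ZMod v, y - x ∈ L →
        ∃! E, (E ∈ {E | ∃ p, ∃ hp : p ∈ P, ∃ t : ZMod v,
          E = Set.range (fun i : ZMod k =>
            ({s p hp (f i) + t, s p hp (f (i+1)) + t} : Finset (ZMod v)))}) ∧
          ({x, y} : Finset (ZMod v)) ∈ E := by
      intro x y hd
      set d := y - x with hdd
      obtain ⟨p, ⟨hp, hdp⟩, huniq⟩ := hcover d hd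
      have hmemd : d ∈ Finset.univ.image (a p hp) := by rw [haimg p hp]; exact hdp
      obtain ⟨j, -, hj⟩ := Finset.mem_image.mp hmemd
      set i1 : ZMod k := (j.val : ZMod k) with hi1
      have hfi1 : f i1 = j := by
        apply Fin.ext
        simp only [hf, hi1]
        exact ZMod.val_natCast_of_lt j.isLt
      set i0 : ZMod k := i1 - 1 with hi0
      have hi01 : i0 + 1 = i1 := by ring
      set t : ZMod v := x - s p hp (f i0) with ht
      have hedge : ({s p hp (f i0) + t, s p hp (f (i0+1)) + t} : Finset (ZMod v)) = {x, y} := by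
        have h1 : s p hp (f i0) + t = x := by rw [ht]; ring
        have h3 := hkey p hp i0
        rw [hi01, hfi1, hj] at h3
        rw [hdd] at h3
        have h2 : s p hp (f (i0+1)) + t = y := by
          rw [hi01, hfi1, ht]
          linear_combination h3
        rw [h1, h2]
      refine ⟨_, ⟨⟨p, hp, t, rfl⟩, ⟨i0, hedge⟩⟩, ?_⟩
      rintro E ⟨⟨q, hq, t', rfl⟩, ⟨i, hi⟩⟩
      have hi' : ({s q hq (f i) + t', s q hq (f (i+1)) + t'} : Finset (ZMod v)) = {x, y} := hi
      have hdiff : s q hq (f (i+1)) - s q hq (f i) = a q hq (f (i+1)) := hkey q hq i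
      have hmem : a q hq (f (i+1)) ∈ q := by
        have := Finset.mem_image_of_mem (a q hq) (Finset.mem_univ (f (i+1)))
        rwa [haimg q hq] at this
      have haL : a q hq (f (i+1)) ∈ L := hsub q hq hmem
      rcases pairEq _ _ _ _ hi' with ⟨h1, h2⟩ | ⟨h1, h2⟩
      · -- forward orientation
        have had : a q hq (f (i+1)) = d := by
          rw [← hdiff, hdd]; linear_combination h2 - h1
        have hqp : q = p := huniq q ⟨hq, had ▸ hmem⟩
        subst hqp
        have hji : f (i+1) = j := hain q hq (by rw [had, ← hj])
        have hii : i + 1 = i1 := hfinj (by rw [hji, hfi1])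
        have hieq : i = i0 := by rw [hi0, ← hii]; ring
        have hteq : t' = t := by
          rw [ht, ← hieq]
          linear_combination h1
        rw [hteq]
      · -- reverse orientation: contradiction
        exfalso
        have had : a q hq (f (i+1)) = -d := by
          rw [← hdiff, hdd]; linear_combination h2 - h1
        have hd0 : d ≠ 0 := fun h => h0 (h ▸ hd)
        have hnL := (hL d hd0).mp hd
        rw [had] at haL
        exact hnL haL
    intro x y hxy
    by_cases hd : y - x ∈ L
    · exact main x y hd
    · have hd0 : y - x ≠ 0 := sub_ne_zero.mpr (Ne.symm hxy)
      have hxyL : x - y ∈ L := by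
        have h1 := hL (y - x) hd0
        have h2 : ¬ (-(y-x) ∉ L) := fun h => hd (h1.mpr h)
        rw [neg_sub] at h2
        exact not_not.mp h2
      have := main y x hxyL
      rw [Finset.pair_comm x y]
      exact this
  · -- invariance
    rintro E ⟨p, hp, t, rfl⟩
    refine ⟨p, hp, t + 1, ?_⟩
    rw [← Set.range_comp]
    apply congrArg
    funext i
    simp only [Function.comp]
    rw [Finset.image_insert, Finset.image_singleton]
    simp only [add_assoc]
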